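/- arXiv:2110.06054 — 2 statements merged into one kernel-verified Lean document; each statement's English description precedes it below -/
import Mathlib

section
/- For every finite simple graph without isolated vertices and every k ∈ {1,…,n}: λ_k⁻(Δ_1) = ĥ_k⁻, i.e. the k-th variational eigenvalue of the graph 1-Laplacian equals the k-th modified combinatorial Cheeger constant defined via the Krasnoselskii genus. -/
open scoped BigOperators Pointwise NNReal Classical

noncomputable section

/-! ### The graph `p`-Laplacian: Rayleigh quotients, genus, variational eigenvalues -/

/-- `Σ_{{i,j}∈E} |x_i − x_j|^p` (each unordered edge counted once). -/
def TVp {n : ℕ} (G : SimpleGraph (Fin n)) [DecidableRel G.Adj] (p : ℝ) (x : Fin n → ℝ) : ℝ :=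
  (∑ i : Fin n, ∑ j : Fin n, if G.Adj i j then |x i - x j| ^ p else 0) / 2

/-- `Σ_{i∈V} deg(i)·|x_i|^p`. -/
def Np {n : ℕ} (G : SimpleGraph (Fin n)) [DecidableRel G.Adj] (p : ℝ) (x : Fin n → ℝ) : ℝ :=
  ∑ i : Fin n, (G.degree i : ℝ) * |x i| ^ p

/-- The `p`-Rayleigh quotient `F_p`. -/
def Fp {n : ℕ} (G : SimpleGraph (Fin n)) [DecidableRel G.Adj] (p : ℝ) (x : Fin n → ℝ) : ℝ :=
  TVp G p x / Np G p x

/-- A set is (centrally) symmetric if `S = -S`. -/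
def SymmSet {n : ℕ} (S : Set (Fin n → ℝ)) : Prop := ∀ x ∈ S, -x ∈ S

/-- There is a continuous odd map from `S` to the unit sphere `𝕊^{k-1} ⊂ ℝ^k`. -/
def HasOddMapToSphere {n : ℕ} (S : Set (Fin n → ℝ)) (k : ℕ) : Prop :=
  ∃ φ : (Fin n → ℝ) → EuclideanSpace ℝ (Fin k),
    ContinuousOn φ S ∧ (∀ x ∈ S, ‖φ x‖ = 1) ∧ ∀ x ∈ S, φ (-x) = -φ x

/-- There is a continuous odd map from the unit sphere `𝕊^{k-1} ⊂ ℝ^k` to `S`. -/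
def HasOddMapFromSphere {n : ℕ} (S : Set (Fin n → ℝ)) (k : ℕ) : Prop :=
  ∃ φ : EuclideanSpace ℝ (Fin k) → (Fin n → ℝ),
    ContinuousOn φ (Metric.sphere (0 : EuclideanSpace ℝ (Fin k)) 1) ∧
    (∀ x ∈ Metric.sphere (0 : EuclideanSpace ℝ (Fin k)) 1, φ x ∈ S) ∧
    ∀ x ∈ Metric.sphere (0 : EuclideanSpace ℝ (Fin k)) 1, φ (-x) = -φ x

/-- The Krasnoselskii genus `γ⁻`. -/
def genNeg {n : ℕ} (S : Set (Fin n → ℝ)) : ℕ :=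
  if S.Nonempty ∧ SymmSet S then sInf {k | 1 ≤ k ∧ HasOddMapToSphere S k} else 0

/-- The index `γ⁺`. -/
def genPos {n : ℕ} (S : Set (Fin n → ℝ)) : ℕ :=
  if S.Nonempty ∧ SymmSet S then sSup {k | 1 ≤ k ∧ HasOddMapFromSphere S k} else 0

/-- Admissible sets for the min-max principle: symmetric compact subsets of `ℝ^n∖{0}`. -/
def Admissible {n : ℕ} (S : Set (Fin n → ℝ)) : Prop :=
  IsCompact S ∧ (0 : Fin n → ℝ) ∉ S ∧ SymmSet S

/-- The variational eigenvalues `λ_k⁻(Δ_p)`. -/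
def lamNeg {n : ℕ} (G : SimpleGraph (Fin n)) [DecidableRel G.Adj] (p : ℝ) (k : ℕ) : ℝ :=
  sInf {r | ∃ S : Set (Fin n → ℝ), Admissible S ∧ k ≤ genNeg S ∧ r = sSup (Fp G p '' S)}

/-- The min-max eigenvalues `λ_k⁺(Δ_p)`. -/
def lamPos {n : ℕ} (G : SimpleGraph (Fin n)) [DecidableRel G.Adj] (p : ℝ) (k : ℕ) : ℝ :=
  sInf {r | ∃ S : Set (Fin n → ℝ), Admissible S ∧ k ≤ genPos S ∧ r = sSup (Fp G p '' S)}

/-! ### Eigenpairs of `Δ_p` -/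

/-- The set-valued sign: `Sgn(t) = {1}` if `t>0`, `[-1,1]` if `t=0`, `{-1}` if `t<0`. -/
def Sgn (t : ℝ) : Set ℝ := if 0 < t then {1} else if t < 0 then {-1} else Set.Icc (-1) 1

/-- Eigenpairs of the graph `p`-Laplacian for `p > 1`.  (Note that for `t = 0` the
expression `|t|^(p-2) * t` equals `0`, matching the convention `|t|^{p-2}t = 0`.) -/
def IsEigenpairP {n : ℕ} (G : SimpleGraph (Fin n)) [DecidableRel G.Adj] (p lam : ℝ)
    (x : Fin n → ℝ) : Prop :=
  x ≠ 0 ∧ ∀ i, (∑ j : Fin n, if G.Adj i j then |x i - x j| ^ (p - 2) * (x i - x j) else 0) =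
    lam * (G.degree i : ℝ) * (|x i| ^ (p - 2) * x i)

/-- Eigenpairs of the graph `1`-Laplacian. -/
def IsEigenpair1 {n : ℕ} (G : SimpleGraph (Fin n)) [DecidableRel G.Adj] (lam : ℝ)
    (x : Fin n → ℝ) : Prop :=
  x ≠ 0 ∧ ∃ z : Fin n → Fin n → ℝ,
    (∀ i j, G.Adj i j → z i j ∈ Sgn (x i - x j)) ∧
    (∀ i j, G.Adj i j → z i j = -z j i) ∧
    ∀ i, (∑ j : Fin n, if G.Adj i j then z i j else 0) ∈
      (fun s => lam * (G.degree i : ℝ) * s) '' Sgn (x i)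

/-- Eigenpairs of `Δ_p` for `p ≥ 1` (with the `1`-Laplacian convention at `p = 1`). -/
def IsEigenpair {n : ℕ} (G : SimpleGraph (Fin n)) [DecidableRel G.Adj] (p lam : ℝ)
    (x : Fin n → ℝ) : Prop :=
  (p = 1 ∧ IsEigenpair1 G lam x) ∨ (1 < p ∧ IsEigenpairP G p lam x)

/-! ### Cheeger constants -/

/-- `|∂A|`: the number of edges with exactly one endpoint in `A`. -/
def eBoundary {n : ℕ} (G : SimpleGraph (Fin n)) [DecidableRel G.Adj] (A : Finset (Fin n)) : ℕ :=
  ∑ i ∈ A, ∑ j ∈ Aᶜ, if G.Adj i j then 1 else 0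

/-- `vol(A) = Σ_{i∈A} deg(i)`. -/
def volG {n : ℕ} (G : SimpleGraph (Fin n)) [DecidableRel G.Adj] (A : Finset (Fin n)) : ℕ :=
  ∑ i ∈ A, G.degree i

/-- The multi-way Cheeger constants `h_k`. -/
def cheeger {n : ℕ} (G : SimpleGraph (Fin n)) [DecidableRel G.Adj] (k : ℕ) : ℝ :=
  sInf {r | ∃ A : Fin k → Finset (Fin n), (∀ i, (A i).Nonempty) ∧
    (∀ i j, i ≠ j → Disjoint (A i) (A j)) ∧
    r = ⨆ i, (eBoundary G (A i) : ℝ) / (volG G (A i) : ℝ)}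
/-! ### The map Φ -/

/-- `Φ_c(x)_i = |x_i|^c · sign(x_i)`. -/
def Phi {n : ℕ} (c : ℝ) (x : Fin n → ℝ) : Fin n → ℝ := fun i => |x i| ^ c * Real.sign (x i)

/-! ### The simplicial complex `K_n` and the modified Cheeger constants -/

/-- The vector `1_A - 1_B`. -/
def charVec {n : ℕ} (A B : Finset (Fin n)) : Fin n → ℝ :=
  fun i => if i ∈ A then 1 else if i ∈ B then -1 else 0

/-- The inclusion order on pairs of sets: `(A,B) ≺ (A',B')` iff `A ⊆ A'` and `B ⊆ B'`. -/
def pairLE {n : ℕ} (a b : Finset (Fin n) × Finset (Fin n)) : Prop := a.1 ⊆ b.1 ∧ a.2 ⊆ b.2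

/-- The geometric realization `|K(𝒜)|`: the union over all chains of elements of `𝒜` of the
convex hulls of the corresponding vectors `1_A - 1_B`. -/
def geomComplex {n : ℕ} (𝒜 : Set (Finset (Fin n) × Finset (Fin n))) : Set (Fin n → ℝ) :=
  ⋃ (C : Set (Finset (Fin n) × Finset (Fin n))) (_ : C ⊆ 𝒜) (_ : IsChain pairLE C),
    convexHull ℝ ((fun ab => charVec ab.1 ab.2) '' C)

/-- The modified combinatorial `k`-way Cheeger constant `ĥ_k⁻`. -/
def hHatNeg {n : ℕ} (G : SimpleGraph (Fin n)) [DecidableRel G.Adj] (k : ℕ) : ℝ :=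
  sInf {r | ∃ 𝒜 : Set (Finset (Fin n) × Finset (Fin n)),
    (∀ ab ∈ 𝒜, Disjoint ab.1 ab.2 ∧ (ab.1 ∪ ab.2).Nonempty) ∧
    k ≤ genNeg (geomComplex 𝒜) ∧
    r = sSup ((fun ab : Finset (Fin n) × Finset (Fin n) =>
      ((eBoundary G ab.1 : ℝ) + (eBoundary G ab.2 : ℝ)) / (volG G (ab.1 ∪ ab.2) : ℝ)) '' 𝒜)}

/-! ### Subpartitions into cliques and the pseudo-independence number -/

/-- `c(V_i) = 1` if `|V_i| ≤ 2` and `c(V_i) = 2` if `|V_i| ≥ 3`. -/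
def cOf {n : ℕ} (A : Finset (Fin n)) : ℕ := if A.card ≤ 2 then 1 else 2

/-- A subpartition of `V` into sets each inducing a complete subgraph of `G`. -/
def IsCliqueSubpartition {n : ℕ} (G : SimpleGraph (Fin n)) (P : Finset (Finset (Fin n))) : Prop :=
  (∀ A ∈ P, A.Nonempty ∧ G.IsClique (A : Set (Fin n))) ∧
    ∀ A ∈ P, ∀ B ∈ P, A ≠ B → Disjoint A B

/-- The members of `P` are pairwise non-adjacent: every edge of `G` meets at most one of them. -/
def PairwiseNonAdjacent {n : ℕ} (G : SimpleGraph (Fin n)) (P : Finset (Finset (Fin n))) : Prop :=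
  ∀ i j, G.Adj i j → ∀ A ∈ P, ∀ B ∈ P, (i ∈ A ∨ j ∈ A) → (i ∈ B ∨ j ∈ B) → A = B

/-- The pseudo-independence number `α_*(G)`. -/
def pseudoIndepNum {n : ℕ} (G : SimpleGraph (Fin n)) : ℕ :=
  sSup {m | ∃ P : Finset (Finset (Fin n)), IsCliqueSubpartition G P ∧
    PairwiseNonAdjacent G P ∧ m = ∑ A ∈ P, cOf A}

/-- `h_*(P)`. -/
def hStar {n : ℕ} (G : SimpleGraph (Fin n)) [DecidableRel G.Adj]
    (P : Finset (Finset (Fin n))) : ℝ :=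
  sInf {r | ∃ A : Finset (Fin n), A.Nonempty ∧ (∀ v ∈ A, ∃ W ∈ P, v ∈ W) ∧
    (∀ W ∈ P, (A ∩ W).card ≤ 1) ∧ r = (eBoundary G A : ℝ) / (volG G A : ℝ)}

/-! ### The set-valued 1-Laplacian and the p-Laplacian operator -/

/-- The set `Δ_1 x`. -/
def Delta1Set {n : ℕ} (G : SimpleGraph (Fin n)) [DecidableRel G.Adj] (x : Fin n → ℝ) :
    Set (Fin n → ℝ) :=
  {v | ∃ z : Fin n → Fin n → ℝ,
    (∀ i j, G.Adj i j → z i j ∈ Sgn (x i - x j)) ∧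
    (∀ i j, G.Adj i j → z i j = -z j i) ∧
    v = fun i => ∑ j : Fin n, if G.Adj i j then z i j else 0}

/-- The `p`-Laplacian `Δ_p x` for `p > 1`. -/
def DeltaP {n : ℕ} (G : SimpleGraph (Fin n)) [DecidableRel G.Adj] (p : ℝ) (x : Fin n → ℝ) :
    Fin n → ℝ :=
  fun i => ∑ j : Fin n, if G.Adj i j then |x i - x j| ^ (p - 2) * (x i - x j) else 0

/-- The normalized eigenspace `Ŝ_λ(Δ_p)`. -/
def hatS {n : ℕ} (G : SimpleGraph (Fin n)) [DecidableRel G.Adj] (p lam : ℝ) :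
    Set (Fin n → ℝ) :=
  {x | ‖x‖ = 1 ∧ IsEigenpair G p lam x}

/-!
On a chain `(A₁,B₁) ≺ ⋯ ≺ (A_m,B_m)` of disjoint pairs the vectors `1_{A_k} - 1_{B_k}` are
comonotone along every edge and at every vertex, so `TV₁` and `N₁` are additive on their
nonnegative combinations: on `|K(𝒜)|` they are weighted sums of `|∂A| + |∂B|` and `vol(A ∪ B)`
over `𝒜`. Hence `F₁ ≤ max_𝒜 (|∂A| + |∂B|) / vol(A ∪ B)` on the admissible set `|K(𝒜)|`, which
gives `λ_k⁻ ≤ ĥ_k⁻`.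

Conversely, by the layer-cake formula every `x` with `‖x‖_∞ = 1` is the combination of its level
pairs `({x > s}, {x < -s})`, `0 < s < 1`, weighted by length, and these pairs form a chain.
If `F₁(x) ≤ r`, some level pair of positive weight has ratio `≤ r`, so the weighted barycenter of
the level pairs of ratio `≤ r` is defined; it depends continuously (by dominated convergence) and
oddly on `x`, and maps an admissible `S` into `|K(𝒜_r)|`. Monotonicity of the genus under odd maps
gives `ĥ_k⁻ ≤ λ_k⁻`.
-/

abbrev SetPair (n : ℕ) := Finset (Fin n) × Finset (Fin n)

section RayleighQuotient

variable {n : ℕ} (G : SimpleGraph (Fin n)) [DecidableRel G.Adj]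

lemma TVp_one (x : Fin n → ℝ) :
    TVp G 1 x = (∑ i, ∑ j, if G.Adj i j then |x i - x j| else 0) / 2 := by
  simp [TVp]

lemma Np_one (x : Fin n → ℝ) : Np G 1 x = ∑ i, (G.degree i : ℝ) * |x i| := by
  simp [Np]

lemma sum_ite_adj (i : Fin n) (c : ℝ) :
    (∑ j, if G.Adj i j then c else 0) = G.degree i * c := by
  rw [← Finset.sum_filter, ← SimpleGraph.neighborFinset_eq_filter, Finset.sum_const,
    SimpleGraph.card_neighborFinset_eq_degree, nsmul_eq_mul]

lemma TVp_nonneg (p : ℝ) (x : Fin n → ℝ) : 0 ≤ TVp G p x := by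
  unfold TVp
  positivity

lemma Np_nonneg (p : ℝ) (x : Fin n → ℝ) : 0 ≤ Np G p x := by
  unfold Np
  positivity

lemma Fp_nonneg (p : ℝ) (x : Fin n → ℝ) : 0 ≤ Fp G p x :=
  div_nonneg (TVp_nonneg G p x) (Np_nonneg G p x)

lemma Np_pos (hdeg : ∀ i, 0 < G.degree i) (p : ℝ) {x : Fin n → ℝ} (hx : x ≠ 0) :
    0 < Np G p x := by
  obtain ⟨i, hi⟩ := Function.ne_iff.1 hx
  refine Finset.sum_pos' (fun j _ => by positivity) ⟨i, Finset.mem_univ _, ?_⟩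
  exact mul_pos (Nat.cast_pos.2 (hdeg i)) (Real.rpow_pos_of_pos (abs_pos.2 hi) p)

lemma TVp_smul (p : ℝ) {c : ℝ} (hc : 0 ≤ c) (x : Fin n → ℝ) :
    TVp G p (c • x) = c ^ p * TVp G p x := by
  simp only [TVp, Pi.smul_apply, smul_eq_mul, ← mul_sub, abs_mul, abs_of_nonneg hc,
    Real.mul_rpow hc (abs_nonneg _)]
  rw [mul_div_assoc']
  simp only [Finset.mul_sum, mul_ite, mul_zero]

lemma Np_smul (p : ℝ) {c : ℝ} (hc : 0 ≤ c) (x : Fin n → ℝ) :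
    Np G p (c • x) = c ^ p * Np G p x := by
  simp only [Np, Pi.smul_apply, smul_eq_mul, abs_mul, abs_of_nonneg hc,
    Real.mul_rpow hc (abs_nonneg _), Finset.mul_sum]
  exact Finset.sum_congr rfl fun i _ => by ring

lemma Fp_smul (p : ℝ) {c : ℝ} (hc : 0 < c) (x : Fin n → ℝ) : Fp G p (c • x) = Fp G p x := by
  rw [Fp, Fp, TVp_smul G p hc.le, Np_smul G p hc.le,
    mul_div_mul_left _ _ (Real.rpow_pos_of_pos hc p).ne']

lemma TVp_one_le_Np_one (x : Fin n → ℝ) : TVp G 1 x ≤ Np G 1 x := by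
  have hswap : (∑ i, ∑ j, if G.Adj i j then |x j| else 0) =
      ∑ i, ∑ j, if G.Adj i j then |x i| else 0 := by
    rw [Finset.sum_comm]
    simp only [G.adj_comm]
  have hNp : (∑ i, ∑ j, if G.Adj i j then |x i| else 0) = Np G 1 x := by
    simp only [sum_ite_adj, Np_one]
  rw [TVp_one, div_le_iff₀ two_pos]
  calc (∑ i, ∑ j, if G.Adj i j then |x i - x j| else 0)
      ≤ ∑ i, ∑ j, ((if G.Adj i j then |x i| else 0) + if G.Adj i j then |x j| else 0) := by
        gcongr with i _ j _
        split_ifs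
        · exact abs_sub _ _
        · simp
    _ = Np G 1 x * 2 := by
        simp only [Finset.sum_add_distrib, hswap, hNp]
        ring

lemma Fp_one_le_one (x : Fin n → ℝ) : Fp G 1 x ≤ 1 :=
  div_le_one_of_le₀ (TVp_one_le_Np_one G x) (Np_nonneg G 1 x)

end RayleighQuotient

section CharVec

variable {n : ℕ} (G : SimpleGraph (Fin n)) [DecidableRel G.Adj]

lemma eBoundary_eq_sum (A : Finset (Fin n)) :
    (eBoundary G A : ℝ) =
      ∑ i, ∑ j, if G.Adj i j then (if i ∈ A ∧ j ∉ A then 1 else 0) else 0 := by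
  simp only [eBoundary, Nat.cast_sum, Nat.cast_ite, Nat.cast_one, Nat.cast_zero]
  rw [← Finset.sum_subset (Finset.subset_univ A) fun i _ hi => by simp [hi]]
  refine Finset.sum_congr rfl fun i hi => ?_
  rw [← Finset.sum_subset (Finset.subset_univ Aᶜ) fun j _ hj => by simp_all]
  exact Finset.sum_congr rfl fun j hj => by simp_all

lemma eBoundary_eq_sum' (A : Finset (Fin n)) :
    (eBoundary G A : ℝ) =
      ∑ i, ∑ j, if G.Adj i j then (if j ∈ A ∧ i ∉ A then 1 else 0) else 0 := by
  rw [eBoundary_eq_sum, Finset.sum_comm]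
  simp only [G.adj_comm]

lemma abs_charVec_sub {A B : Finset (Fin n)} (h : Disjoint A B) (i j : Fin n) :
    |charVec A B i - charVec A B j| =
      ((if i ∈ A ∧ j ∉ A then 1 else 0) + (if j ∈ A ∧ i ∉ A then 1 else 0)) +
      ((if i ∈ B ∧ j ∉ B then 1 else 0) + (if j ∈ B ∧ i ∉ B then 1 else 0)) := by
  have hi : i ∈ A → i ∉ B := fun hA => Finset.disjoint_left.1 h hA
  have hj : j ∈ A → j ∉ B := fun hA => Finset.disjoint_left.1 h hA
  unfold charVec
  by_cases i ∈ A <;> by_cases j ∈ A <;> by_cases i ∈ B <;> by_cases j ∈ B <;> simp_all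
  norm_num

lemma abs_charVec {A B : Finset (Fin n)} (h : Disjoint A B) (i : Fin n) :
    |charVec A B i| = if i ∈ A ∪ B then 1 else 0 := by
  have hi : i ∈ A → i ∉ B := fun hA => Finset.disjoint_left.1 h hA
  unfold charVec
  by_cases i ∈ A <;> by_cases i ∈ B <;> simp_all

lemma TVp_charVec {A B : Finset (Fin n)} (h : Disjoint A B) :
    TVp G 1 (charVec A B) = eBoundary G A + eBoundary G B := by
  simp only [TVp_one, abs_charVec_sub h, ite_add_zero, Finset.sum_add_distrib,
    ← eBoundary_eq_sum, ← eBoundary_eq_sum']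
  ring

lemma Np_charVec {A B : Finset (Fin n)} (h : Disjoint A B) :
    Np G 1 (charVec A B) = volG G (A ∪ B) := by
  simp only [Np_one, abs_charVec h, mul_ite, mul_one, mul_zero, volG, Nat.cast_sum]
  rw [Finset.sum_ite_mem, Finset.univ_inter]

lemma charVec_swap {A B : Finset (Fin n)} (h : Disjoint A B) : charVec B A = -charVec A B := by
  ext i
  have hi : i ∈ A → i ∉ B := fun hA => Finset.disjoint_left.1 h hA
  unfold charVec
  by_cases i ∈ A <;> by_cases i ∈ B <;> simp_all

lemma charVec_cases (A B : Finset (Fin n)) (v : Fin n) :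
    charVec A B v = 1 ∨ charVec A B v = -1 ∨ charVec A B v = 0 := by
  unfold charVec
  split_ifs <;> simp

lemma charVec_eq_of_le {p q : SetPair n} (hpq : p ≤ q) (hq : Disjoint q.1 q.2) {v : Fin n}
    (hv : charVec p.1 p.2 v ≠ 0) : charVec q.1 q.2 v = charVec p.1 p.2 v := by
  unfold charVec at *
  by_cases h1 : v ∈ p.1
  · rw [if_pos h1, if_pos (hpq.1 h1)]
  · by_cases h2 : v ∈ p.2
    · rw [if_neg h1, if_pos h2, if_neg (Finset.disjoint_right.1 hq (hpq.2 h2)), if_pos (hpq.2 h2)]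
    · simp [h1, h2] at hv

lemma charVec_mul_nonneg_of_le {p q : SetPair n} (hpq : p ≤ q) (hq : Disjoint q.1 q.2)
    (v : Fin n) : 0 ≤ charVec p.1 p.2 v * charVec q.1 q.2 v := by
  by_cases hv : charVec p.1 p.2 v = 0
  · simp [hv]
  · rw [charVec_eq_of_le hpq hq hv]
    exact mul_self_nonneg _

lemma sub_mul_sub_nonneg_of_trichotomy {a b a' b' : ℝ} (ha : a = 1 ∨ a = -1 ∨ a = 0)
    (hb : b = 1 ∨ b = -1 ∨ b = 0) (ha' : a' = 1 ∨ a' = -1 ∨ a' = 0)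
    (hb' : b' = 1 ∨ b' = -1 ∨ b' = 0) (haa : a ≠ 0 → a' = a) (hbb : b ≠ 0 → b' = b) :
    0 ≤ (a - b) * (a' - b') := by
  rcases ha with rfl | rfl | rfl <;> rcases hb with rfl | rfl | rfl <;>
    rcases ha' with rfl | rfl | rfl <;> rcases hb' with rfl | rfl | rfl <;> norm_num at *

lemma charVec_sub_mul_nonneg_of_le {p q : SetPair n} (hpq : p ≤ q) (hq : Disjoint q.1 q.2)
    (i j : Fin n) :
    0 ≤ (charVec p.1 p.2 i - charVec p.1 p.2 j) * (charVec q.1 q.2 i - charVec q.1 q.2 j) :=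
  sub_mul_sub_nonneg_of_trichotomy (charVec_cases _ _ _) (charVec_cases _ _ _)
    (charVec_cases _ _ _) (charVec_cases _ _ _) (charVec_eq_of_le hpq hq) (charVec_eq_of_le hpq hq)

end CharVec

section Comonotone

lemma abs_sum_eq_sum_abs_of_mul_nonneg {ι R : Type*} [Ring R] [LinearOrder R]
    [IsStrictOrderedRing R] (s : Finset ι) (f : ι → R) (h : ∀ i ∈ s, ∀ j ∈ s, 0 ≤ f i * f j) :
    |∑ i ∈ s, f i| = ∑ i ∈ s, |f i| := by
  by_cases hpos : ∃ i ∈ s, 0 < f i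
  · obtain ⟨i, hi, hfi⟩ := hpos
    have hnn : ∀ j ∈ s, 0 ≤ f j := fun j hj => nonneg_of_mul_nonneg_right (h i hi j hj) hfi
    rw [abs_of_nonneg (Finset.sum_nonneg hnn)]
    exact Finset.sum_congr rfl fun j hj => (abs_of_nonneg (hnn j hj)).symm
  · push Not at hpos
    rw [abs_of_nonpos (Finset.sum_nonpos hpos), ← Finset.sum_neg_distrib]
    exact Finset.sum_congr rfl fun j hj => (abs_of_nonpos (hpos j hj)).symm

variable {ι : Type*} [Fintype ι]

lemma abs_sum_mul_eq_sum_mul_abs {w : ι → ℝ} (hw : ∀ k, 0 ≤ w k) {a : ι → ℝ}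
    (ha : ∀ k l, w k ≠ 0 → w l ≠ 0 → 0 ≤ a k * a l) :
    |∑ k, w k * a k| = ∑ k, w k * |a k| := by
  rw [abs_sum_eq_sum_abs_of_mul_nonneg]
  · simp only [abs_mul, abs_of_nonneg (hw _)]
  · intro k _ l _
    by_cases hk : w k = 0
    · simp [hk]
    by_cases hl : w l = 0
    · simp [hl]
    convert mul_nonneg (mul_nonneg (hw k) (hw l)) (ha k l hk hl) using 1
    ring

variable {n : ℕ} (G : SimpleGraph (Fin n)) [DecidableRel G.Adj]

lemma TVp_one_sum_smul {w : ι → ℝ} (hw : ∀ k, 0 ≤ w k) {y : ι → Fin n → ℝ}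
    (hy : ∀ k l, w k ≠ 0 → w l ≠ 0 → ∀ i j, 0 ≤ (y k i - y k j) * (y l i - y l j)) :
    TVp G 1 (∑ k, w k • y k) = ∑ k, w k * TVp G 1 (y k) := by
  have hedge : ∀ i j, (if G.Adj i j then |(∑ k, w k • y k) i - (∑ k, w k • y k) j| else 0) =
      ∑ k, w k * (if G.Adj i j then |y k i - y k j| else 0) := by
    intro i j
    simp only [Finset.sum_apply, Pi.smul_apply, smul_eq_mul, ← Finset.sum_sub_distrib, ← mul_sub,
      abs_sum_mul_eq_sum_mul_abs hw fun k l hk hl => hy k l hk hl i j, mul_ite, mul_zero,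
      Finset.sum_ite_irrel, Finset.sum_const_zero]
  simp only [TVp_one, hedge]
  rw [Finset.sum_comm_cycle]
  simp only [← Finset.mul_sum, Finset.sum_div, mul_div_assoc]

lemma Np_one_sum_smul {w : ι → ℝ} (hw : ∀ k, 0 ≤ w k) {y : ι → Fin n → ℝ}
    (hy : ∀ k l, w k ≠ 0 → w l ≠ 0 → ∀ i, 0 ≤ y k i * y l i) :
    Np G 1 (∑ k, w k • y k) = ∑ k, w k * Np G 1 (y k) := by
  simp only [Np_one, Finset.sum_apply, Pi.smul_apply, smul_eq_mul,
    abs_sum_mul_eq_sum_mul_abs hw fun k l hk hl => hy k l hk hl _, Finset.mul_sum]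
  rw [Finset.sum_comm]
  exact Finset.sum_congr rfl fun k _ => Finset.sum_congr rfl fun i _ => by ring

end Comonotone

section ChainWeighting

variable {n : ℕ}

/-- `P₂(V)`. -/
def properPairs (n : ℕ) : Set (SetPair n) := {p | Disjoint p.1 p.2 ∧ (p.1 ∪ p.2).Nonempty}

variable (G : SimpleGraph (Fin n)) [DecidableRel G.Adj]

def pairCut (p : SetPair n) : ℝ := eBoundary G p.1 + eBoundary G p.2

def pairVol (p : SetPair n) : ℝ := volG G (p.1 ∪ p.2)

lemma pairCut_swap (p : SetPair n) : pairCut G p.swap = pairCut G p :=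
  add_comm _ _

lemma pairVol_swap (p : SetPair n) : pairVol G p.swap = pairVol G p := by
  rw [pairVol, pairVol, Prod.fst_swap, Prod.snd_swap, Finset.union_comm]

lemma pairVol_pos (hdeg : ∀ i, 0 < G.degree i) {p : SetPair n} (hp : (p.1 ∪ p.2).Nonempty) :
    0 < pairVol G p := by
  obtain ⟨i, hi⟩ := hp
  exact Nat.cast_pos.2 (Finset.sum_pos' (fun _ _ => Nat.zero_le _) ⟨i, hi, hdeg i⟩)

lemma cutRatio_nonneg (p : SetPair n) : 0 ≤ pairCut G p / pairVol G p := by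
  unfold pairCut pairVol
  positivity

structure IsChainWeighting {ι : Type*} (w : ι → ℝ) (z : ι → SetPair n) : Prop where
  nonneg : ∀ k, 0 ≤ w k
  disjoint : ∀ k, w k ≠ 0 → Disjoint (z k).1 (z k).2
  chain : ∀ k l, w k ≠ 0 → w l ≠ 0 → z k ≤ z l ∨ z l ≤ z k

namespace IsChainWeighting

variable {G} {ι : Type*} {w : ι → ℝ} {z : ι → SetPair n}

lemma indicator (hwz : IsChainWeighting w z) (s : Set ι) : IsChainWeighting (s.indicator w) z where
  nonneg k := Set.indicator_nonneg (fun k _ => hwz.nonneg k) k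
  disjoint k hk := hwz.disjoint k fun h => hk (by simp [Set.indicator_apply, h])
  chain k l hk hl := hwz.chain k l (fun h => hk (by simp [Set.indicator_apply, h]))
    (fun h => hl (by simp [Set.indicator_apply, h]))

lemma charVec_mul_nonneg (hwz : IsChainWeighting w z) {k l : ι} (hk : w k ≠ 0) (hl : w l ≠ 0)
    (i : Fin n) : 0 ≤ charVec (z k).1 (z k).2 i * charVec (z l).1 (z l).2 i := by
  rcases hwz.chain k l hk hl with h | h
  · exact charVec_mul_nonneg_of_le h (hwz.disjoint l hl) i
  · rw [mul_comm]
    exact charVec_mul_nonneg_of_le h (hwz.disjoint k hk) i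

lemma charVec_sub_mul_nonneg (hwz : IsChainWeighting w z) {k l : ι} (hk : w k ≠ 0)
    (hl : w l ≠ 0) (i j : Fin n) :
    0 ≤ (charVec (z k).1 (z k).2 i - charVec (z k).1 (z k).2 j) *
      (charVec (z l).1 (z l).2 i - charVec (z l).1 (z l).2 j) := by
  rcases hwz.chain k l hk hl with h | h
  · exact charVec_sub_mul_nonneg_of_le h (hwz.disjoint l hl) i j
  · rw [mul_comm]
    exact charVec_sub_mul_nonneg_of_le h (hwz.disjoint k hk) i j

variable [Fintype ι]

lemma sum_smul_charVec_ne_zero (hwz : IsChainWeighting w z) {k : ι} (hk : w k ≠ 0)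
    (hzk : ((z k).1 ∪ (z k).2).Nonempty) : ∑ l, w l • charVec (z l).1 (z l).2 ≠ 0 := by
  obtain ⟨i, hi⟩ := hzk
  intro h0
  have habs := congrFun h0 i
  simp only [Finset.sum_apply, Pi.smul_apply, smul_eq_mul, Pi.zero_apply] at habs
  have hle : w k * |charVec (z k).1 (z k).2 i| ≤ 0 := by
    rw [← abs_zero, ← habs, abs_sum_mul_eq_sum_mul_abs hwz.nonneg
      fun k l hk hl => hwz.charVec_mul_nonneg hk hl i]
    exact Finset.single_le_sum (f := fun l => w l * |charVec (z l).1 (z l).2 i|)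
      (fun l _ => mul_nonneg (hwz.nonneg l) (abs_nonneg _)) (Finset.mem_univ k)
  rw [abs_charVec (hwz.disjoint k hk), if_pos hi, mul_one] at hle
  exact hk (le_antisymm hle (hwz.nonneg k))

variable (G)

lemma TVp_sum (hwz : IsChainWeighting w z) :
    TVp G 1 (∑ k, w k • charVec (z k).1 (z k).2) = ∑ k, w k * pairCut G (z k) := by
  rw [TVp_one_sum_smul G hwz.nonneg fun k l hk hl => hwz.charVec_sub_mul_nonneg hk hl]
  refine Finset.sum_congr rfl fun k _ => ?_
  by_cases hk : w k = 0
  · simp [hk]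
  · rw [TVp_charVec G (hwz.disjoint k hk), pairCut]

lemma Np_sum (hwz : IsChainWeighting w z) :
    Np G 1 (∑ k, w k • charVec (z k).1 (z k).2) = ∑ k, w k * pairVol G (z k) := by
  rw [Np_one_sum_smul G hwz.nonneg fun k l hk hl => hwz.charVec_mul_nonneg hk hl]
  refine Finset.sum_congr rfl fun k _ => ?_
  by_cases hk : w k = 0
  · simp [hk]
  · rw [Np_charVec G (hwz.disjoint k hk), pairVol]

end IsChainWeighting

end ChainWeighting

section GeomComplex

variable {n : ℕ} {𝒜 : Set (SetPair n)}

lemma mem_geomComplex {x : Fin n → ℝ} :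
    x ∈ geomComplex 𝒜 ↔
      ∃ C ⊆ 𝒜, IsChain (· ≤ ·) C ∧ x ∈ convexHull ℝ ((fun p => charVec p.1 p.2) '' C) := by
  simp only [geomComplex, Set.mem_iUnion, exists_prop]
  -- `pairLE` is the product order on `SetPair n`
  rfl

lemma isCompact_geomComplex (𝒜 : Set (SetPair n)) : IsCompact (geomComplex 𝒜) :=
  isCompact_iUnion fun C => isCompact_iUnion fun _ => isCompact_iUnion fun _ =>
    ((Set.toFinite C).image _).isCompact_convexHull (𝕜 := ℝ)

lemma exists_chainWeighting_of_mem_geomComplex (h𝒜 : 𝒜 ⊆ properPairs n) {x : Fin n → ℝ}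
    (hx : x ∈ geomComplex 𝒜) :
    ∃ (ι : Type) (_ : Fintype ι) (w : ι → ℝ) (z : ι → SetPair n), IsChainWeighting w z ∧
      ∑ k, w k = 1 ∧ (∀ k, z k ∈ 𝒜) ∧ x = ∑ k, w k • charVec (z k).1 (z k).2 := by
  obtain ⟨C, hC𝒜, hC, hx⟩ := mem_geomComplex.1 hx
  obtain ⟨ι, _, w, y, hw, hw1, hy, rfl⟩ := mem_convexHull_iff_exists_fintype.1 hx
  choose z hzC hzy using hy
  refine ⟨ι, inferInstance, w, z, ⟨hw, fun k _ => (h𝒜 (hC𝒜 (hzC k))).1, fun k l _ _ => ?_⟩,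
    hw1, fun k => hC𝒜 (hzC k), by simp only [hzy]⟩
  exact hC.total (hzC k) (hzC l)

lemma symmSet_geomComplex (h𝒜 : 𝒜 ⊆ properPairs n) (hswap : ∀ p ∈ 𝒜, p.swap ∈ 𝒜) :
    SymmSet (geomComplex 𝒜) := by
  intro x hx
  obtain ⟨C, hC𝒜, hC, hx⟩ := mem_geomComplex.1 hx
  have himage : (fun p : SetPair n => charVec p.1 p.2) '' (Prod.swap '' C) =
      -((fun p : SetPair n => charVec p.1 p.2) '' C) := by
    rw [Set.image_image, ← Set.image_neg_eq_neg, Set.image_image]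
    exact Set.image_congr fun p hp => charVec_swap (h𝒜 (hC𝒜 hp)).1
  refine mem_geomComplex.2 ⟨Prod.swap '' C, ?_, ?_, ?_⟩
  · rintro _ ⟨p, hp, rfl⟩
    exact hswap p (hC𝒜 hp)
  · rintro _ ⟨p, hp, rfl⟩ _ ⟨q, hq, rfl⟩ hne
    exact (hC hp hq fun h => hne (h ▸ rfl)).imp (fun h => ⟨h.2, h.1⟩) (fun h => ⟨h.2, h.1⟩)
  · rw [himage, convexHull_neg]
    exact Set.neg_mem_neg.2 hx

lemma zero_notMem_geomComplex (h𝒜 : 𝒜 ⊆ properPairs n) : (0 : Fin n → ℝ) ∉ geomComplex 𝒜 := by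
  intro h0
  obtain ⟨ι, _, w, z, hwz, hw1, hz𝒜, hx⟩ := exists_chainWeighting_of_mem_geomComplex h𝒜 h0
  obtain ⟨k, -, hk⟩ :=
    Finset.exists_ne_zero_of_sum_ne_zero (s := Finset.univ) (f := w) (by simp [hw1])
  exact hwz.sum_smul_charVec_ne_zero hk (h𝒜 (hz𝒜 k)).2 hx.symm

variable (G : SimpleGraph (Fin n)) [DecidableRel G.Adj]

lemma TVp_le_of_mem_geomComplex (h𝒜 : 𝒜 ⊆ properPairs n) {R : ℝ}
    (hR : ∀ p ∈ 𝒜, pairCut G p ≤ R * pairVol G p) {x : Fin n → ℝ} (hx : x ∈ geomComplex 𝒜) :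
    TVp G 1 x ≤ R * Np G 1 x := by
  obtain ⟨ι, _, w, z, hwz, -, hz𝒜, rfl⟩ := exists_chainWeighting_of_mem_geomComplex h𝒜 hx
  rw [hwz.TVp_sum G, hwz.Np_sum G, Finset.mul_sum]
  refine Finset.sum_le_sum fun k _ => ?_
  rw [mul_left_comm]
  exact mul_le_mul_of_nonneg_left (hR _ (hz𝒜 k)) (hwz.nonneg k)

end GeomComplex

section Genus

variable {n : ℕ}

lemma nonempty_and_symmSet_of_genNeg_pos {S : Set (Fin n → ℝ)} (h : 0 < genNeg S) :
    S.Nonempty ∧ SymmSet S := by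
  by_contra hS
  rw [genNeg, if_neg hS] at h
  exact lt_irrefl 0 h

lemma hasOddMapToSphere_of_zero_notMem {K : Set (Fin n → ℝ)} (h0 : (0 : Fin n → ℝ) ∉ K) :
    HasOddMapToSphere K n := by
  let e := (EuclideanSpace.equiv (Fin n) ℝ).symm
  have he : ∀ x ∈ K, e x ≠ 0 := fun x hx hex => h0 (e.injective (hex.trans (map_zero e).symm) ▸ hx)
  refine ⟨fun x => ‖e x‖⁻¹ • e x, ?_, fun x hx => norm_smul_inv_norm (he x hx), fun x _ => ?_⟩
  · exact (e.continuous.norm.continuousOn.inv₀ fun x hx => norm_ne_zero_iff.2 (he x hx)).smul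
      e.continuous.continuousOn
  · simp only [map_neg, norm_neg, smul_neg]

lemma genNeg_le_of_odd_map {S K : Set (Fin n → ℝ)} (hK : SymmSet K)
    (h0 : (0 : Fin n → ℝ) ∉ K) {ψ : (Fin n → ℝ) → Fin n → ℝ} (hψc : ContinuousOn ψ S)
    (hψK : Set.MapsTo ψ S K) (hψo : ∀ x ∈ S, ψ (-x) = -ψ x) : genNeg S ≤ genNeg K := by
  by_cases hS : S.Nonempty ∧ SymmSet S
  swap
  · rw [genNeg, if_neg hS]
    exact Nat.zero_le _
  obtain ⟨x, hx⟩ := hS.1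
  have hn : 1 ≤ n := by
    rcases Nat.eq_zero_or_pos n with rfl | hn
    · exact absurd (Subsingleton.elim (ψ x) 0 ▸ hψK hx) h0
    · exact hn
  rw [genNeg, genNeg, if_pos hS, if_pos ⟨⟨ψ x, hψK hx⟩, hK⟩]
  obtain ⟨hk, φ, hφc, hφ1, hφo⟩ :=
    Nat.sInf_mem (s := {k | 1 ≤ k ∧ HasOddMapToSphere K k})
      ⟨n, hn, hasOddMapToSphere_of_zero_notMem h0⟩
  refine Nat.sInf_le ⟨hk, φ ∘ ψ, hφc.comp hψc hψK, fun x hx => hφ1 _ (hψK hx), fun x hx => ?_⟩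
  simp only [Function.comp_apply, hψo x hx, hφo _ (hψK hx)]

end Genus

section LevelSets

open MeasureTheory

variable {n : ℕ}

def levelPair (x : Fin n → ℝ) (s : ℝ) : SetPair n :=
  (Finset.univ.filter fun i => s < x i, Finset.univ.filter fun i => x i < -s)

@[simp] lemma mem_levelPair_fst {x : Fin n → ℝ} {s : ℝ} {i : Fin n} :
    i ∈ (levelPair x s).1 ↔ s < x i := by
  simp [levelPair]

@[simp] lemma mem_levelPair_snd {x : Fin n → ℝ} {s : ℝ} {i : Fin n} :
    i ∈ (levelPair x s).2 ↔ x i < -s := by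
  simp [levelPair]

lemma levelPair_antitone (x : Fin n → ℝ) : Antitone (levelPair x) := fun s t hst =>
  ⟨fun i hi => by simp only [mem_levelPair_fst] at hi ⊢; linarith,
    fun i hi => by simp only [mem_levelPair_snd] at hi ⊢; linarith⟩

lemma levelPair_neg (x : Fin n → ℝ) (s : ℝ) : levelPair (-x) s = (levelPair x s).swap := by
  ext i <;> simp [lt_neg]

lemma disjoint_levelPair (x : Fin n → ℝ) {s : ℝ} (hs : 0 ≤ s) :
    Disjoint (levelPair x s).1 (levelPair x s).2 :=
  Finset.disjoint_left.2 fun i h1 h2 => by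
    simp only [mem_levelPair_fst, mem_levelPair_snd] at h1 h2
    linarith

lemma levelPair_mem_properPairs {x : Fin n → ℝ} {s : ℝ} (hs0 : 0 ≤ s) (hs : s < ‖x‖) :
    levelPair x s ∈ properPairs n := by
  refine ⟨disjoint_levelPair x hs0, ?_⟩
  by_contra hempty
  simp only [Finset.not_nonempty_iff_eq_empty, Finset.eq_empty_iff_forall_notMem, Finset.mem_union,
    mem_levelPair_fst, mem_levelPair_snd, not_or, not_lt] at hempty
  refine hs.not_ge ((pi_norm_le_iff_of_nonneg hs0).2 fun i => ?_)
  rw [Real.norm_eq_abs, abs_le]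
  exact ⟨by linarith [(hempty i).2], (hempty i).1⟩

lemma charVec_levelPair (x : Fin n → ℝ) {s : ℝ} (hs : 0 ≤ s) (i : Fin n) :
    charVec (levelPair x s).1 (levelPair x s).2 i =
      (if s < x i then 1 else 0) - (if s < -x i then 1 else 0) := by
  unfold charVec
  simp only [mem_levelPair_fst, mem_levelPair_snd, lt_neg]
  split_ifs <;> linarith

lemma measurableSet_levelPair_eq (x : Fin n → ℝ) (p : SetPair n) :
    MeasurableSet {s | levelPair x s = p} :=
  Set.OrdConnected.measurableSet ⟨fun _ hs _ ht _ hu =>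
    le_antisymm (hs ▸ levelPair_antitone x hu.1) (ht ▸ levelPair_antitone x hu.2)⟩

lemma integrable_ite_levelPair_eq (x : Fin n → ℝ) (p : SetPair n) :
    Integrable (fun s => if levelPair x s = p then (1 : ℝ) else 0)
      (volume.restrict (Set.Ioo 0 1)) := by
  have h : (fun s => if levelPair x s = p then (1 : ℝ) else 0) =
      {s | levelPair x s = p}.indicator 1 := by
    ext s
    simp [Set.indicator_apply]
  rw [h]
  exact (integrable_const 1).indicator (measurableSet_levelPair_eq x p)

def levelWeight (x : Fin n → ℝ) (p : SetPair n) : ℝ :=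
  ∫ s in Set.Ioo 0 1, if levelPair x s = p then 1 else 0

variable {E : Type*} [NormedAddCommGroup E] [NormedSpace ℝ E]

lemma comp_levelPair_eq_sum (h : SetPair n → E) (x : Fin n → ℝ) (s : ℝ) :
    h (levelPair x s) = ∑ p, (if levelPair x s = p then (1 : ℝ) else 0) • h p := by
  simp [ite_smul]

lemma integrable_comp_levelPair (h : SetPair n → E) (x : Fin n → ℝ) :
    Integrable (fun s => h (levelPair x s)) (volume.restrict (Set.Ioo 0 1)) := by
  simp_rw [comp_levelPair_eq_sum h x]
  exact integrable_finsetSum _ fun p _ => (integrable_ite_levelPair_eq x p).smul_const (h p)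

lemma setIntegral_comp_levelPair [CompleteSpace E] (h : SetPair n → E) (x : Fin n → ℝ) :
    ∫ s in Set.Ioo 0 1, h (levelPair x s) = ∑ p, levelWeight x p • h p := by
  simp_rw [comp_levelPair_eq_sum h x]
  rw [integral_finsetSum _ fun p _ => (integrable_ite_levelPair_eq x p).smul_const (h p)]
  simp only [integral_smul_const, levelWeight]

lemma levelWeight_nonneg (x : Fin n → ℝ) (p : SetPair n) : 0 ≤ levelWeight x p :=
  setIntegral_nonneg measurableSet_Ioo fun s _ => by split_ifs <;> norm_num

lemma sum_levelWeight (x : Fin n → ℝ) : ∑ p, levelWeight x p = 1 := by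
  simpa using (setIntegral_comp_levelPair (fun _ => (1 : ℝ)) x).symm

lemma exists_levelPair_eq_of_levelWeight_ne_zero {x : Fin n → ℝ} {p : SetPair n}
    (h : levelWeight x p ≠ 0) : ∃ s ∈ Set.Ioo (0 : ℝ) 1, levelPair x s = p := by
  by_contra! hne
  exact h (setIntegral_eq_zero_of_forall_eq_zero fun s hs => if_neg (hne s hs))

lemma isChainWeighting_levelWeight (x : Fin n → ℝ) : IsChainWeighting (levelWeight x) id where
  nonneg := levelWeight_nonneg x
  disjoint p hp := by
    obtain ⟨s, hs, rfl⟩ := exists_levelPair_eq_of_levelWeight_ne_zero hp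
    exact disjoint_levelPair x hs.1.le
  chain p q hp hq := by
    obtain ⟨s, -, rfl⟩ := exists_levelPair_eq_of_levelWeight_ne_zero hp
    obtain ⟨t, -, rfl⟩ := exists_levelPair_eq_of_levelWeight_ne_zero hq
    exact ((le_total s t).imp (fun h => levelPair_antitone x h) fun h => levelPair_antitone x h).symm

lemma ite_lt_eq_indicator (a : ℝ) :
    (fun s : ℝ => if s < a then (1 : ℝ) else 0) = (Set.Iio a).indicator 1 := by
  ext s
  simp [Set.indicator_apply]

lemma setIntegral_ite_lt {a : ℝ} (ha : a ≤ 1) :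
    ∫ s in Set.Ioo 0 1, (if s < a then (1 : ℝ) else 0) = max a 0 := by
  rw [ite_lt_eq_indicator, integral_indicator_one measurableSet_Iio,
    measureReal_restrict_apply measurableSet_Iio, Set.Iio_inter_Ioo, Real.volume_real_Ioo,
    min_eq_left ha, sub_zero]

lemma sum_levelWeight_smul_charVec {x : Fin n → ℝ} (hx : ‖x‖ ≤ 1) :
    ∑ p, levelWeight x p • charVec p.1 p.2 = x := by
  ext i
  have hxi : |x i| ≤ 1 := (norm_le_pi_norm x i).trans hx
  have hint : ∀ a : ℝ, Integrable (fun s : ℝ => if s < a then (1 : ℝ) else 0)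
      (volume.restrict (Set.Ioo 0 1)) := fun a => by
    rw [ite_lt_eq_indicator]
    exact (integrable_const 1).indicator measurableSet_Iio
  simp only [Finset.sum_apply, Pi.smul_apply]
  rw [← setIntegral_comp_levelPair (fun p => charVec p.1 p.2 i) x,
    setIntegral_congr_fun measurableSet_Ioo fun s hs => charVec_levelPair x hs.1.le i,
    integral_sub (hint _) (hint _), setIntegral_ite_lt (abs_le.1 hxi).2,
    setIntegral_ite_lt (by linarith [(abs_le.1 hxi).1]), max_zero_sub_max_neg_zero_eq_self]

end LevelSets

section LevelContinuity

open MeasureTheory Filter Topology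

variable {n : ℕ}

lemma eventually_lt_iff_of_ne {X : Type*} [TopologicalSpace X] {f : X → ℝ} {x₀ : X}
    (hf : ContinuousAt f x₀) {c : ℝ} (hc : f x₀ ≠ c) : ∀ᶠ x in 𝓝 x₀, (f x < c ↔ f x₀ < c) := by
  rcases hc.lt_or_gt with h | h
  · exact (hf.eventually (gt_mem_nhds h)).mono fun x hx => iff_of_true hx h
  · exact (hf.eventually (lt_mem_nhds h)).mono fun x hx => iff_of_false hx.not_gt h.not_gt

lemma eventually_levelPair_eq {x₀ : Fin n → ℝ} {s : ℝ} (hs : ∀ i, s ≠ x₀ i ∧ s ≠ -x₀ i) :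
    ∀ᶠ x in 𝓝 x₀, levelPair x s = levelPair x₀ s := by
  have hevent : ∀ᶠ x in 𝓝 x₀, ∀ i, (-x i < -s ↔ -x₀ i < -s) ∧ (x i < -s ↔ x₀ i < -s) :=
    eventually_all.2 fun i =>
      (eventually_lt_iff_of_ne (f := fun x : Fin n → ℝ => -x i)
        (continuous_apply i).neg.continuousAt
        fun h => (hs i).1 (neg_inj.1 h).symm).and
      (eventually_lt_iff_of_ne (f := fun x : Fin n → ℝ => x i) (continuous_apply i).continuousAt
        fun h => (hs i).2 (by rw [h, neg_neg]))
  filter_upwards [hevent] with x hx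
  ext i
  · simpa only [mem_levelPair_fst, neg_lt_neg_iff] using (hx i).1
  · simpa only [mem_levelPair_snd] using (hx i).2

variable {E : Type*} [NormedAddCommGroup E] [NormedSpace ℝ E]

lemma continuous_setIntegral_comp_levelPair (h : SetPair n → E) :
    Continuous fun x : Fin n → ℝ => ∫ s in Set.Ioo 0 1, h (levelPair x s) := by
  refine continuous_iff_continuousAt.2 fun x₀ => ?_
  refine continuousAt_of_dominated (bound := fun _ => ∑ p, ‖h p‖)
    (.of_forall fun x => (integrable_comp_levelPair h x).aestronglyMeasurable)
    (.of_forall fun x => .of_forall fun s => Finset.single_le_sum (f := fun p => ‖h p‖)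
      (fun _ _ => norm_nonneg _) (Finset.mem_univ _))
    (integrable_const _) ?_
  -- off the finite set `{± x₀ i}`, `levelPair · s` is locally constant at `x₀`
  have hcount : (⋃ i, ({x₀ i, -x₀ i} : Set ℝ)).Countable :=
    (Set.finite_iUnion fun i => (Set.finite_singleton _).insert _).countable
  filter_upwards [ae_restrict_of_ae (hcount.ae_notMem volume)] with s hs
  simp only [Set.mem_iUnion, Set.mem_insert_iff, Set.mem_singleton_iff, not_exists, not_or] at hs
  exact continuousAt_const.congr
    ((eventually_levelPair_eq hs).mono fun x hx => congrArg h hx.symm)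

lemma continuous_levelWeight (p : SetPair n) : Continuous fun x => levelWeight x p :=
  continuous_setIntegral_comp_levelPair fun q => if q = p then (1 : ℝ) else 0

end LevelContinuity

section LevelBarycenter

variable {n : ℕ}

def levelBarycenter (𝒜 : Set (SetPair n)) (x : Fin n → ℝ) : Fin n → ℝ :=
  Finset.univ.centerMass (𝒜.indicator (levelWeight x)) fun p => charVec p.1 p.2

variable {𝒜 : Set (SetPair n)}

lemma levelBarycenter_mem_geomComplex {x : Fin n → ℝ}
    (hx : 0 < ∑ p, 𝒜.indicator (levelWeight x) p) : levelBarycenter 𝒜 x ∈ geomComplex 𝒜 := by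
  set w := 𝒜.indicator (levelWeight x)
  have hw : IsChainWeighting w id := (isChainWeighting_levelWeight x).indicator 𝒜
  refine mem_geomComplex.2 ⟨{p | w p ≠ 0}, fun p hp => Set.mem_of_indicator_ne_zero hp,
    fun p hp q hq _ => hw.chain p q hp hq, ?_⟩
  rw [levelBarycenter, ← Finset.centerMass_filter_ne_zero]
  refine Finset.centerMass_mem_convexHull _ (fun p _ => hw.nonneg p) ?_
    fun p hp => ⟨p, (Finset.mem_filter.1 hp).2, rfl⟩
  rwa [Finset.sum_filter_ne_zero]

lemma continuousAt_levelBarycenter {x : Fin n → ℝ}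
    (hx : 0 < ∑ p, 𝒜.indicator (levelWeight x) p) : ContinuousAt (levelBarycenter 𝒜) x := by
  have hw : ∀ p, Continuous fun y => 𝒜.indicator (levelWeight y) p := fun p => by
    by_cases hp : p ∈ 𝒜
    · simpa only [Set.indicator_of_mem hp] using continuous_levelWeight p
    · simpa only [Set.indicator_of_notMem hp] using continuous_const
  exact ((continuous_finsetSum _ fun p _ => hw p).continuousAt.inv₀ hx.ne').smul
    (continuous_finsetSum _ fun p _ => (hw p).smul continuous_const).continuousAt

lemma levelWeight_neg (x : Fin n → ℝ) (p : SetPair n) :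
    levelWeight (-x) p = levelWeight x p.swap := by
  simp only [levelWeight, levelPair_neg, Prod.swap_eq_iff_eq_swap]

lemma levelBarycenter_neg (h𝒜 : ∀ p ∈ 𝒜, p.swap ∈ 𝒜) (x : Fin n → ℝ) :
    levelBarycenter 𝒜 (-x) = -levelBarycenter 𝒜 x := by
  simp only [levelBarycenter, Finset.centerMass]
  set w := 𝒜.indicator (levelWeight x)
  have hw : IsChainWeighting w id := (isChainWeighting_levelWeight x).indicator 𝒜
  have hind : ∀ p : SetPair n, 𝒜.indicator (levelWeight (-x)) p = w p.swap := fun p => by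
    have hmem : p.swap ∈ 𝒜 ↔ p ∈ 𝒜 := ⟨fun h => p.swap_swap ▸ h𝒜 _ h, h𝒜 p⟩
    simp only [w, Set.indicator_apply, hmem, levelWeight_neg]
  have hsum : ∑ p : SetPair n, w p.swap = ∑ p, w p := Equiv.sum_comp (Equiv.prodComm _ _) w
  have hvec : ∑ p : SetPair n, w p.swap • charVec p.1 p.2 = -∑ p, w p • charVec p.1 p.2 := by
    rw [← Finset.sum_neg_distrib,
      ← Equiv.sum_comp (Equiv.prodComm _ _) fun p => -(w p • charVec p.1 p.2)]
    refine Finset.sum_congr rfl fun p _ => ?_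
    by_cases hp : w p.swap = 0
    · simp [hp]
    · have hd : Disjoint p.2 p.1 := hw.disjoint _ hp
      rw [Equiv.prodComm_apply, Prod.fst_swap, Prod.snd_swap, charVec_swap hd, smul_neg]
  simp only [hind, hsum, hvec, smul_neg]

end LevelBarycenter

section Cheeger

variable {n : ℕ} (G : SimpleGraph (Fin n)) [DecidableRel G.Adj]

def cutRatioSublevel (r : ℝ) : Set (SetPair n) :=
  {p | p ∈ properPairs n ∧ pairCut G p / pairVol G p ≤ r}

lemma exists_levelWeight_ne_zero_cut_le {x : Fin n → ℝ} (hx : ‖x‖ ≤ 1) {r : ℝ}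
    (hF : TVp G 1 x ≤ r * Np G 1 x) :
    ∃ p, levelWeight x p ≠ 0 ∧ pairCut G p ≤ r * pairVol G p := by
  have hw := isChainWeighting_levelWeight x
  have hTV := hw.TVp_sum G
  have hN := hw.Np_sum G
  simp only [id, sum_levelWeight_smul_charVec hx] at hTV hN
  rw [hTV, hN, Finset.mul_sum] at hF
  by_contra! hcut
  obtain ⟨p, -, hp⟩ := Finset.exists_ne_zero_of_sum_ne_zero (s := Finset.univ)
    (f := levelWeight x) (by simp [sum_levelWeight])
  refine hF.not_gt (Finset.sum_lt_sum (fun q _ => ?_) ⟨p, Finset.mem_univ p, ?_⟩)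
  · by_cases hq : levelWeight x q = 0
    · simp [hq]
    · rw [mul_left_comm]
      exact mul_le_mul_of_nonneg_left (hcut q hq).le (levelWeight_nonneg x q)
  · rw [mul_left_comm]
    exact mul_lt_mul_of_pos_left (hcut p hp) ((levelWeight_nonneg x p).lt_of_ne' hp)

lemma sum_indicator_levelWeight_normalize_pos (hdeg : ∀ i, 0 < G.degree i) {x : Fin n → ℝ}
    (hx : x ≠ 0) {r : ℝ} (hF : Fp G 1 x ≤ r) :
    0 < ∑ p, (cutRatioSublevel G r).indicator (levelWeight (‖x‖⁻¹ • x)) p := by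
  set y := ‖x‖⁻¹ • x
  have hy : ‖y‖ = 1 := norm_smul_inv_norm hx
  have hFy : TVp G 1 y ≤ r * Np G 1 y := by
    rw [← Fp_smul G 1 (inv_pos.2 (norm_pos_iff.2 hx)) x, Fp,
      div_le_iff₀ (Np_pos G hdeg 1 (norm_ne_zero_iff.1 (hy ▸ one_ne_zero)))] at hF
    exact hF
  obtain ⟨p, hp0, hcut⟩ := exists_levelWeight_ne_zero_cut_le G hy.le hFy
  obtain ⟨s, hs, rfl⟩ := exists_levelPair_eq_of_levelWeight_ne_zero hp0
  have hpair := levelPair_mem_properPairs hs.1.le (hy ▸ hs.2)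
  have hmem : levelPair y s ∈ cutRatioSublevel G r :=
    ⟨hpair, (div_le_iff₀ (pairVol_pos G hdeg hpair.2)).2 hcut⟩
  refine lt_of_lt_of_le ?_ (Finset.single_le_sum (fun q _ => Set.indicator_nonneg
    (fun q _ => levelWeight_nonneg y q) q) (Finset.mem_univ (levelPair y s)))
  rw [Set.indicator_of_mem hmem]
  exact (levelWeight_nonneg y _).lt_of_ne' hp0

end Cheeger

section Main

variable {n : ℕ} (G : SimpleGraph (Fin n)) [DecidableRel G.Adj]

lemma sSup_Fp_geomComplex_le (hdeg : ∀ i, 0 < G.degree i) {𝒜 : Set (SetPair n)}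
    (h𝒜 : 𝒜 ⊆ properPairs n) :
    sSup (Fp G 1 '' geomComplex 𝒜) ≤ sSup ((fun p => pairCut G p / pairVol G p) '' 𝒜) := by
  set R := sSup ((fun p => pairCut G p / pairVol G p) '' 𝒜)
  have hR0 : 0 ≤ R := Real.sSup_nonneg fun _ ⟨p, _, h⟩ => h ▸ cutRatio_nonneg G p
  have hR : ∀ p ∈ 𝒜, pairCut G p ≤ R * pairVol G p := fun p hp =>
    (div_le_iff₀ (pairVol_pos G hdeg (h𝒜 hp).2)).1
      (le_csSup (Set.toFinite _).bddAbove ⟨p, hp, rfl⟩)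
  exact Real.sSup_le (fun _ ⟨x, hx, h⟩ => h ▸ div_le_of_le_mul₀ (Np_nonneg G 1 x) hR0
    (TVp_le_of_mem_geomComplex G h𝒜 hR hx)) hR0

lemma exists_geomComplex_genNeg_le (hdeg : ∀ i, 0 < G.degree i) {S : Set (Fin n → ℝ)}
    (h0 : (0 : Fin n → ℝ) ∉ S) :
    ∃ 𝒜 ⊆ properPairs n, genNeg S ≤ genNeg (geomComplex 𝒜) ∧
      sSup ((fun p => pairCut G p / pairVol G p) '' 𝒜) ≤ sSup (Fp G 1 '' S) := by
  set r := sSup (Fp G 1 '' S)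
  set 𝒜 := cutRatioSublevel G r
  have h𝒜 : 𝒜 ⊆ properPairs n := fun p hp => hp.1
  have hswap : ∀ p ∈ 𝒜, p.swap ∈ 𝒜 := fun p ⟨⟨hd, hne⟩, hr⟩ =>
    ⟨⟨hd.symm, by rwa [Prod.fst_swap, Prod.snd_swap, Finset.union_comm]⟩,
      by rwa [pairCut_swap, pairVol_swap]⟩
  have hpos : ∀ x ∈ S, 0 < ∑ p, 𝒜.indicator (levelWeight (‖x‖⁻¹ • x)) p := fun x hx =>
    sum_indicator_levelWeight_normalize_pos G hdeg (fun h => h0 (h ▸ hx))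
      (le_csSup ⟨1, fun _ ⟨y, _, h⟩ => h ▸ Fp_one_le_one G y⟩ ⟨x, hx, rfl⟩)
  have hcont : ContinuousOn (fun x => levelBarycenter 𝒜 (‖x‖⁻¹ • x)) S := fun x hx =>
    (continuousAt_levelBarycenter (hpos x hx)).comp_continuousWithinAt (f := fun y => ‖y‖⁻¹ • y)
      ((continuous_norm.continuousWithinAt.inv₀
        (norm_ne_zero_iff.2 fun h => h0 (h ▸ hx))).smul continuousWithinAt_id)
  refine ⟨𝒜, h𝒜, genNeg_le_of_odd_map (symmSet_geomComplex h𝒜 hswap)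
    (zero_notMem_geomComplex h𝒜) hcont (fun x hx => levelBarycenter_mem_geomComplex (hpos x hx))
    (fun x _ => by simp only [norm_neg, smul_neg, levelBarycenter_neg hswap]), ?_⟩
  exact Real.sSup_le (fun _ ⟨p, hp, h⟩ => h ▸ hp.2)
      (Real.sSup_nonneg fun _ ⟨x, _, h⟩ => h ▸ Fp_nonneg G 1 x)

end Main

theorem stmt5_general {n : ℕ} (G : SimpleGraph (Fin n)) [DecidableRel G.Adj]
    (hdeg : ∀ i, 0 < G.degree i) (k : ℕ) (hk1 : 1 ≤ k) :
    lamNeg G 1 k = hHatNeg G k := by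
  refine csInf_eq_csInf_of_forall_exists_le ?_ ?_
  · rintro _ ⟨S, hS, hkS, rfl⟩
    obtain ⟨𝒜, h𝒜, hgen, hle⟩ := exists_geomComplex_genNeg_le G hdeg hS.2.1
    exact ⟨_, ⟨𝒜, h𝒜, hkS.trans hgen, rfl⟩, hle⟩
  · rintro _ ⟨𝒜, h𝒜, hk𝒜, rfl⟩
    have hsymm := (nonempty_and_symmSet_of_genNeg_pos (hk1.trans hk𝒜)).2
    exact ⟨_, ⟨geomComplex 𝒜, ⟨isCompact_geomComplex 𝒜, zero_notMem_geomComplex h𝒜, hsymm⟩,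
      hk𝒜, rfl⟩, sSup_Fp_geomComplex_le G hdeg h𝒜⟩

/-- **`λ_k⁻(Δ_1) = ĥ_k⁻`.** -/
theorem stmt5 {n : ℕ} (G : SimpleGraph (Fin n)) [DecidableRel G.Adj]
    (hdeg : ∀ i, 0 < G.degree i) (k : ℕ) (hk1 : 1 ≤ k) (hkn : k ≤ n) :
    lamNeg G 1 k = hHatNeg G k :=
  stmt5_general G hdeg k hk1
end
end

section
/- For a finite simple graph without isolated vertices, for p ≥ 1 and λ ∈ ℝ let Ŝ_λ(Δ_p) = { x ∈ ℝ^n : ‖x‖_∞ = 1 and (λ,x) is an eigenpair of Δ_p }. The set-valued map (p,λ) ↦ Ŝ_λ(Δ_p) is upper semi-continuous on [1,∞)×[0,∞): for every (p,λ) ∈ [1,∞)×[0,∞) and every ε > 0 there exists δ > 0 such that whenever p' ≥ 1, λ' ≥ 0, |p'−p| < δ and |λ'−λ| < δ, every point of Ŝ_{λ'}(Δ_{p'}) has Euclidean distance less than ε from some point of Ŝ_λ(Δ_p) (in particular, if Ŝ_λ(Δ_p) is empty then Ŝ_{λ'}(Δ_{p'}) is empty for all such (p',λ')). -/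
open scoped BigOperators Pointwise NNReal Classical

noncomputable section

/-!
For every `p ≥ 1`, the 1-Laplacian included, an eigenpair is certified by edge values
`z_ij ∈ ∂(|·|^p/p)(x_i - x_j)` and vertex values `s_i ∈ ∂(|·|^p/p)(x_i)` with
`Σ_j z_ij = λ deg(i) s_i`, all bounded by `2^(p-1)` when `‖x‖_∞ = 1`.
The graph of `(p, t) ↦ ∂(|·|^p/p)(t)` is closed over `p ≥ 1`: for `t ≠ 0` its value
`|t|^(p-2) t` is continuous in `(p, t)` and equals `sign t` at `p = 1`, while near `t = 0` it is
bounded by `|t|^(p-1) ≤ 1`. Passing to convergent subsequences of certificates, limits of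
normalized eigenpairs are normalized eigenpairs, and compactness of the sphere turns this
closed-graph property into upper semi-continuity.
-/

open Filter Topology

/-- For `q ≥ 1`, the subdifferential of `|·|^q / q` at `t`. -/
def sgnPow (q t : ℝ) : Set ℝ := if q = 1 then Sgn t else {|t| ^ (q - 2) * t}

theorem sgnPow_one (t : ℝ) : sgnPow 1 t = Sgn t := if_pos rfl

theorem sgnPow_of_ne_one {q : ℝ} (hq : q ≠ 1) (t : ℝ) : sgnPow q t = {|t| ^ (q - 2) * t} :=
  if_neg hq

theorem sgnPow_of_ne_zero (q : ℝ) {t : ℝ} (ht : t ≠ 0) : sgnPow q t = {|t| ^ (q - 2) * t} := by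
  rcases eq_or_ne q 1 with rfl | hq
  · have hsign : |t| ^ ((1 : ℝ) - 2) * t = t / |t| := by
      rw [show (1 : ℝ) - 2 = -1 by norm_num, Real.rpow_neg_one, inv_mul_eq_div]
    rw [sgnPow_one, hsign]
    rcases ht.lt_or_gt with h | h
    · simp [Sgn, h, h.not_gt, abs_of_neg h, div_neg, div_self h.ne]
    · simp [Sgn, h, abs_of_pos h, div_self h.ne']
  · exact sgnPow_of_ne_one hq t

theorem abs_le_of_mem_sgnPow {q t s : ℝ} (hq : 1 ≤ q) (hs : s ∈ sgnPow q t) :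
    |s| ≤ |t| ^ (q - 1) := by
  rcases eq_or_ne t 0 with rfl | ht
  · rcases hq.eq_or_lt with rfl | hq
    · rw [sgnPow_one] at hs
      simpa [Sgn, abs_le] using hs
    · rw [sgnPow_of_ne_one hq.ne', Set.mem_singleton_iff] at hs
      simp only [hs, mul_zero, abs_zero]
      positivity
  · rw [sgnPow_of_ne_zero q ht, Set.mem_singleton_iff] at hs
    rw [hs, abs_mul, abs_of_nonneg (Real.rpow_nonneg (abs_nonneg t) _),
      ← Real.rpow_add_one (abs_ne_zero.2 ht)]
    exact le_of_eq (by congr 1; ring)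

theorem mem_sgnPow_of_tendsto {α : Type*} {l : Filter α} [l.NeBot] {qk tk sk : α → ℝ}
    {q t s : ℝ} (hq : Tendsto qk l (𝓝 q)) (ht : Tendsto tk l (𝓝 t)) (hs : Tendsto sk l (𝓝 s))
    (hq1 : ∀ᶠ k in l, 1 ≤ qk k) (h : ∀ᶠ k in l, sk k ∈ sgnPow (qk k) (tk k)) :
    s ∈ sgnPow q t := by
  rcases eq_or_ne t 0 with rfl | ht0
  · have habs : ∀ᶠ k in l, |sk k| ≤ |tk k| ^ (qk k - 1) := by
      filter_upwards [hq1, h] with k using abs_le_of_mem_sgnPow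
    rcases (ge_of_tendsto hq hq1).eq_or_lt with rfl | hq1'
    · have hsmall : ∀ᶠ k in l, |tk k| ≤ 1 :=
        ht.abs.eventually (eventually_le_nhds (by simp))
      have hle : |s| ≤ 1 := by
        refine le_of_tendsto hs.abs ?_
        filter_upwards [habs, hsmall, hq1] with k hk hsk hqk
        exact hk.trans (Real.rpow_le_one (abs_nonneg _) hsk (sub_nonneg.2 hqk))
      simpa [sgnPow_one, Sgn, abs_le] using hle
    · have hpow : Tendsto (fun k => |tk k| ^ (qk k - 1)) l (𝓝 0) := by
        have := (Real.continuousAt_rpow (|0|, q - 1) (Or.inr (by linarith))).tendsto.comp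
          (ht.abs.prodMk_nhds (hq.sub_const 1))
        simpa [Function.comp_def, Real.zero_rpow (by linarith : q - 1 ≠ 0)] using this
      rw [sgnPow_of_ne_one hq1'.ne', Set.mem_singleton_iff, mul_zero]
      exact abs_nonpos_iff.1 (le_of_tendsto_of_tendsto hs.abs hpow habs)
  · rw [sgnPow_of_ne_zero q ht0, Set.mem_singleton_iff]
    have hlim : Tendsto (fun k => |tk k| ^ (qk k - 2) * tk k) l (𝓝 (|t| ^ (q - 2) * t)) :=
      ((Real.continuousAt_rpow (|t|, q - 2) (Or.inl (abs_ne_zero.2 ht0))).tendsto.comp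
        (ht.abs.prodMk_nhds (hq.sub_const 2))).mul ht
    refine tendsto_nhds_unique (hs.congr' ?_) hlim
    filter_upwards [h, ht.eventually_ne ht0] with k hk htk
    rwa [sgnPow_of_ne_zero _ htk] at hk

section Certificate

variable {n : ℕ} {G : SimpleGraph (Fin n)} [DecidableRel G.Adj]

/-- `z` is required to vanish off the edges so that certificates are bounded. -/
structure IsEigenCertificate (G : SimpleGraph (Fin n)) [DecidableRel G.Adj] (p lam : ℝ)
    (x : Fin n → ℝ) (z : Fin n → Fin n → ℝ) (s : Fin n → ℝ) : Prop where
  edge : ∀ i j, z i j ∈ if G.Adj i j then sgnPow p (x i - x j) else {0}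
  antisymm : ∀ i j, z i j = -z j i
  vertex : ∀ i, s i ∈ sgnPow p (x i)
  balance : ∀ i, ∑ j, z i j = lam * G.degree i * s i

namespace IsEigenCertificate

variable {p lam : ℝ} {x : Fin n → ℝ} {z : Fin n → Fin n → ℝ} {s : Fin n → ℝ}

theorem sum_ite_adj (h : IsEigenCertificate G p lam x z s) (i : Fin n) :
    (∑ j, if G.Adj i j then z i j else 0) = ∑ j, z i j := by
  refine Finset.sum_congr rfl fun j _ => ?_
  have := h.edge i j
  split_ifs at this ⊢ with hadj
  · rfl
  · exact (Set.mem_singleton_iff.1 this).symm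

theorem norm_le (h : IsEigenCertificate G p lam x z s) (hp : 1 ≤ p) (hx : ‖x‖ ≤ 1) :
    ‖(z, s)‖ ≤ 2 ^ (p - 1) := by
  have hxi : ∀ i, |x i| ≤ 1 := fun i => (norm_le_pi_norm x i).trans hx
  have hp1 : 0 ≤ p - 1 := sub_nonneg.2 hp
  have hC : (0 : ℝ) ≤ 2 ^ (p - 1) := by positivity
  rw [Prod.norm_def, max_le_iff, pi_norm_le_iff_of_nonneg hC, pi_norm_le_iff_of_nonneg hC]
  refine ⟨fun i => (pi_norm_le_iff_of_nonneg hC).2 fun j => ?_, fun i => ?_⟩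
  · have hz := h.edge i j
    rw [Real.norm_eq_abs]
    split_ifs at hz
    · have hdiff : |x i - x j| ≤ 2 := by linarith [abs_sub (x i) (x j), hxi i, hxi j]
      exact (abs_le_of_mem_sgnPow hp hz).trans
        (Real.rpow_le_rpow (abs_nonneg _) hdiff hp1)
    · simpa [Set.mem_singleton_iff.1 hz] using hC
  · rw [Real.norm_eq_abs]
    calc |s i| ≤ |x i| ^ (p - 1) := abs_le_of_mem_sgnPow hp (h.vertex i)
      _ ≤ 1 := Real.rpow_le_one (abs_nonneg _) (hxi i) hp1
      _ ≤ 2 ^ (p - 1) := Real.one_le_rpow one_le_two hp1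

theorem of_tendsto {α : Type*} {l : Filter α} [l.NeBot] {pk lk : α → ℝ}
    {xk : α → Fin n → ℝ} {zk : α → Fin n → Fin n → ℝ} {sk : α → Fin n → ℝ}
    (hp : Tendsto pk l (𝓝 p)) (hp1 : ∀ᶠ k in l, 1 ≤ pk k) (hlam : Tendsto lk l (𝓝 lam))
    (hx : Tendsto xk l (𝓝 x)) (hz : Tendsto zk l (𝓝 z)) (hs : Tendsto sk l (𝓝 s))
    (h : ∀ᶠ k in l, IsEigenCertificate G (pk k) (lk k) (xk k) (zk k) (sk k)) :
    IsEigenCertificate G p lam x z s := by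
  have hxi i : Tendsto (fun k => xk k i) l (𝓝 (x i)) := tendsto_pi_nhds.1 hx i
  have hzij i j : Tendsto (fun k => zk k i j) l (𝓝 (z i j)) :=
    tendsto_pi_nhds.1 (tendsto_pi_nhds.1 hz i) j
  have hsi i : Tendsto (fun k => sk k i) l (𝓝 (s i)) := tendsto_pi_nhds.1 hs i
  refine ⟨fun i j => ?_, fun i j => ?_, fun i => ?_, fun i => ?_⟩
  · split_ifs with hadj
    · refine mem_sgnPow_of_tendsto hp ((hxi i).sub (hxi j)) (hzij i j) hp1 ?_
      filter_upwards [h] with k hk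
      simpa [hadj] using hk.edge i j
    · refine Set.mem_singleton_iff.2 (tendsto_nhds_unique (hzij i j) ?_)
      refine tendsto_const_nhds.congr' ?_
      filter_upwards [h] with k hk
      exact (by simpa [hadj] using hk.edge i j : zk k i j = 0).symm
  · refine tendsto_nhds_unique (hzij i j) ((hzij j i).neg.congr' ?_)
    filter_upwards [h] with k hk using (hk.antisymm i j).symm
  · exact mem_sgnPow_of_tendsto hp (hxi i) (hsi i) hp1 (h.mono fun k hk => hk.vertex i)
  · refine tendsto_nhds_unique ((tendsto_finsetSum _ fun j _ => hzij i j).congr' ?_)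
      ((hlam.mul tendsto_const_nhds).mul (hsi i))
    filter_upwards [h] with k hk using hk.balance i

end IsEigenCertificate

variable {p lam : ℝ} {x : Fin n → ℝ}

theorem isEigenpair1_iff :
    IsEigenpair1 G lam x ↔ x ≠ 0 ∧ ∃ z s, IsEigenCertificate G 1 lam x z s := by
  constructor
  · rintro ⟨hx, z, hsgn, hanti, hsum⟩
    choose s hs hbal using hsum
    refine ⟨hx, fun i j => if G.Adj i j then z i j else 0, s, ⟨fun i j => ?_, fun i j => ?_,
      fun i => by rw [sgnPow_one]; exact hs i, fun i => (hbal i).symm⟩⟩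
    · split_ifs with hadj
      · rw [sgnPow_one]; exact hsgn i j hadj
      · rfl
    · by_cases hadj : G.Adj i j
      · simp [hadj, hadj.symm, hanti i j hadj]
      · have hadj' : ¬G.Adj j i := fun h => hadj h.symm
        simp [hadj, hadj']
  · rintro ⟨hx, z, s, h⟩
    refine ⟨hx, z, fun i j hadj => ?_, fun i j _ => h.antisymm i j, fun i => ?_⟩
    · simpa [hadj, sgnPow_one] using h.edge i j
    · rw [h.sum_ite_adj]
      exact ⟨s i, sgnPow_one (x i) ▸ h.vertex i, (h.balance i).symm⟩

theorem isEigenpairP_iff (hp : p ≠ 1) :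
    IsEigenpairP G p lam x ↔ x ≠ 0 ∧ ∃ z s, IsEigenCertificate G p lam x z s := by
  constructor
  · rintro ⟨hx, hbal⟩
    refine ⟨hx, fun i j => if G.Adj i j then |x i - x j| ^ (p - 2) * (x i - x j) else 0,
      fun i => |x i| ^ (p - 2) * x i, ⟨fun i j => ?_, fun i j => ?_, fun i => ?_, hbal⟩⟩
    · split_ifs with hadj
      · rw [sgnPow_of_ne_one hp]; rfl
      · rfl
    · by_cases hadj : G.Adj i j
      · simp only [hadj, hadj.symm, if_true, abs_sub_comm (x j)]
        ring
      · have hadj' : ¬G.Adj j i := fun h => hadj h.symm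
        simp [hadj, hadj']
    · rw [sgnPow_of_ne_one hp]; rfl
  · rintro ⟨hx, z, s, h⟩
    refine ⟨hx, fun i => ?_⟩
    have hs := h.vertex i
    rw [sgnPow_of_ne_one hp, Set.mem_singleton_iff] at hs
    rw [← hs, ← h.balance i, ← h.sum_ite_adj]
    refine Finset.sum_congr rfl fun j _ => ?_
    have hz := h.edge i j
    split_ifs at hz ⊢ with hadj
    · rw [sgnPow_of_ne_one hp, Set.mem_singleton_iff] at hz
      exact hz.symm
    · rfl

theorem isEigenpair_iff :
    IsEigenpair G p lam x ↔ 1 ≤ p ∧ x ≠ 0 ∧ ∃ z s, IsEigenCertificate G p lam x z s := by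
  constructor
  · rintro (⟨rfl, h⟩ | ⟨hp, h⟩)
    · exact ⟨le_rfl, isEigenpair1_iff.1 h⟩
    · exact ⟨hp.le, (isEigenpairP_iff hp.ne').1 h⟩
  · rintro ⟨hp, h⟩
    rcases hp.eq_or_lt with rfl | hp
    · exact Or.inl ⟨rfl, isEigenpair1_iff.2 h⟩
    · exact Or.inr ⟨hp, (isEigenpairP_iff hp.ne').2 h⟩

theorem mem_hatS_of_tendsto {pk lk : ℕ → ℝ} {yk : ℕ → Fin n → ℝ} {y : Fin n → ℝ}
    (hp : Tendsto pk atTop (𝓝 p)) (hlam : Tendsto lk atTop (𝓝 lam))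
    (hy : Tendsto yk atTop (𝓝 y)) (h : ∀ k, yk k ∈ hatS G (pk k) (lk k)) :
    y ∈ hatS G p lam := by
  have hnorm : ‖y‖ = 1 :=
    tendsto_nhds_unique hy.norm (tendsto_const_nhds.congr fun k => (h k).1.symm)
  choose hpk _ zk sk hcert using fun k => isEigenpair_iff.1 (h k).2
  have hbound : ∀ᶠ k in atTop, (zk k, sk k) ∈ Metric.closedBall 0 (2 ^ p) := by
    filter_upwards [hp.eventually (eventually_le_nhds (lt_add_one p))] with k hk
    rw [mem_closedBall_zero_iff]
    exact ((hcert k).norm_le (hpk k) (h k).1.le).trans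
      (Real.rpow_le_rpow_of_exponent_le one_le_two (by linarith))
  obtain ⟨⟨z, s⟩, -, φ, hφ, hzs⟩ := (isCompact_closedBall _ _).tendsto_subseq' hbound.frequently
  have hsub {β : Type} {u : ℕ → β} {l : Filter β} (hu : Tendsto u atTop l) :
      Tendsto (fun k => u (φ k)) atTop l :=
    hu.comp hφ.tendsto_atTop
  refine ⟨hnorm, isEigenpair_iff.2 ⟨ge_of_tendsto' hp hpk, norm_ne_zero_iff.1 (by simp [hnorm]),
    z, s, ?_⟩⟩
  exact IsEigenCertificate.of_tendsto (hsub hp) (Eventually.of_forall fun k => hpk (φ k))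
    (hsub hlam) (hsub hy) (hzs.fst_nhds) (hzs.snd_nhds) (Eventually.of_forall fun k => hcert (φ k))

end Certificate

theorem tendsto_of_abs_sub_lt_one_div {u : ℕ → ℝ} {c : ℝ}
    (h : ∀ k : ℕ, |u k - c| < 1 / (k + 1)) : Tendsto u atTop (𝓝 c) := by
  rw [tendsto_iff_dist_tendsto_zero]
  exact squeeze_zero (fun _ => dist_nonneg) (fun k => (h k).le)
    tendsto_one_div_add_atTop_nhds_zero_nat

theorem stmt13_general {n : ℕ} (G : SimpleGraph (Fin n)) [DecidableRel G.Adj] (p lam : ℝ)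
    (ε : ℝ) (hε : 0 < ε) :
    ∃ δ : ℝ, 0 < δ ∧ ∀ p' lam' : ℝ, 1 ≤ p' → 0 ≤ lam' →
      |p' - p| < δ → |lam' - lam| < δ →
      ∀ y ∈ hatS G p' lam', ∃ x ∈ hatS G p lam,
        Real.sqrt (∑ i : Fin n, (y i - x i) ^ 2) < ε := by
  by_contra! hfar
  choose pk lk _ _ hpk hlk yk hyk hfar using fun k : ℕ => hfar (1 / (k + 1)) Nat.one_div_pos_of_nat
  obtain ⟨y, -, φ, hφ, hyt⟩ := (isCompact_sphere (0 : Fin n → ℝ) 1).tendsto_subseq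
    fun k => mem_sphere_zero_iff_norm.2 (hyk k).1
  have hy : y ∈ hatS G p lam :=
    mem_hatS_of_tendsto ((tendsto_of_abs_sub_lt_one_div hpk).comp hφ.tendsto_atTop)
      ((tendsto_of_abs_sub_lt_one_div hlk).comp hφ.tendsto_atTop) hyt fun k => hyk (φ k)
  have hdist : Tendsto (fun k => Real.sqrt (∑ i, (yk (φ k) i - y i) ^ 2)) atTop (𝓝 0) := by
    have hcont : Continuous fun v : Fin n → ℝ => Real.sqrt (∑ i, (v i - y i) ^ 2) := by fun_prop
    simpa [Function.comp_def] using (hcont.tendsto y).comp hyt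
  obtain ⟨k, hk⟩ := (hdist.eventually (gt_mem_nhds hε)).exists
  exact (hfar (φ k) y hy).not_gt hk

/-- **Upper semi-continuity of `(p,λ) ↦ Ŝ_λ(Δ_p)`.** -/
theorem stmt13 {n : ℕ} (G : SimpleGraph (Fin n)) [DecidableRel G.Adj]
    (hdeg : ∀ i, 0 < G.degree i) (p lam : ℝ) (hp : 1 ≤ p) (hlam : 0 ≤ lam)
    (ε : ℝ) (hε : 0 < ε) :
    ∃ δ : ℝ, 0 < δ ∧ ∀ p' lam' : ℝ, 1 ≤ p' → 0 ≤ lam' →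
      |p' - p| < δ → |lam' - lam| < δ →
      ∀ y ∈ hatS G p' lam', ∃ x ∈ hatS G p lam,
        Real.sqrt (∑ i : Fin n, (y i - x i) ^ 2) < ε :=
  stmt13_general G p lam ε hε
end
end
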